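/- If the commutation relations δq̇ᵢ = d/dt(δqᵢ) hold for all i and the total variation condition δ⁽ᵛ⁾g = 0 holds, then d/dt(δ⁽ᶜ⁾g) = Σᵢ 𝒟ᵢg · δqᵢ. -/

import Mathlib

open Function

/-- Partial derivative of `F(q, q̇, t)` with respect to the position coordinate `qᵢ`. -/
noncomputable def pQ {n : ℕ} (F : (Fin n → ℝ) → (Fin n → ℝ) → ℝ → ℝ) (i : Fin n)
    (a v : Fin n → ℝ) (t : ℝ) : ℝ :=
  deriv (fun z => F (Function.update a i z) v t) (a i)

/-- Partial derivative of `F(q, q̇, t)` with respect to the velocity coordinate `q̇ᵢ`. -/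
noncomputable def pV {n : ℕ} (F : (Fin n → ℝ) → (Fin n → ℝ) → ℝ → ℝ) (i : Fin n)
    (a v : Fin n → ℝ) (t : ℝ) : ℝ :=
  deriv (fun z => F a (Function.update v i z) t) (v i)

/-- The velocity of a curve `q : ℝ → ℝⁿ`. -/
noncomputable def vel {n : ℕ} (q : ℝ → Fin n → ℝ) (t : ℝ) : Fin n → ℝ :=
  fun i => deriv (fun s => q s i) t

section

variable {n : ℕ} {g : (Fin n → ℝ) → (Fin n → ℝ) → ℝ → ℝ}

lemma pV_eq_fderiv {i : Fin n} {a v : Fin n → ℝ} {t : ℝ}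
    (hg : DifferentiableAt ℝ
      (fun p : ((Fin n → ℝ) × (Fin n → ℝ)) × ℝ => g p.1.1 p.1.2 p.2) ((a, v), t)) :
    pV g i a v t =
      fderiv ℝ (fun p : ((Fin n → ℝ) × (Fin n → ℝ)) × ℝ => g p.1.1 p.1.2 p.2) ((a, v), t)
        ((0, Pi.single i 1), 0) := by
  have hline : HasDerivAt (fun z => ((a, update v i z), t)) (((0 : Fin n → ℝ),
      (Pi.single i 1 : Fin n → ℝ)), (0 : ℝ)) (v i) :=
    ((hasDerivAt_const _ a).prodMk (hasDerivAt_update v i (v i))).prodMk (hasDerivAt_const _ t)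
  rw [← update_eq_self i v] at hg
  have hchain := (hg.hasFDerivAt.comp_hasDerivAt (v i) hline).deriv
  rwa [update_eq_self] at hchain

lemma contDiff_vel {k : ℕ} {q : ℝ → Fin n → ℝ} (hq : ContDiff ℝ (k + 1) q) :
    ContDiff ℝ k (vel q) :=
  contDiff_pi.mpr fun i => (contDiff_succ_iff_deriv.mp (contDiff_pi.mp hq i)).2.2

lemma differentiable_pV_along_curve
    (hg : ContDiff ℝ 2 (fun p : ((Fin n → ℝ) × (Fin n → ℝ)) × ℝ => g p.1.1 p.1.2 p.2))
    {q : ℝ → Fin n → ℝ} (hq : ContDiff ℝ 2 q) (i : Fin n) :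
    Differentiable ℝ (fun s => pV g i (q s) (vel q s) s) := by
  have hcurve : ContDiff ℝ 1 (fun s => ((q s, vel q s), s)) :=
    ((hq.of_le (by norm_num)).prodMk (contDiff_vel hq)).prodMk contDiff_id
  have hpV : (fun s => pV g i (q s) (vel q s) s) = fun s =>
      fderiv ℝ (fun p : ((Fin n → ℝ) × (Fin n → ℝ)) × ℝ => g p.1.1 p.1.2 p.2)
        ((q s, vel q s), s) ((0, Pi.single i 1), 0) :=
    funext fun s => pV_eq_fderiv (hg.differentiable (by norm_num) _)
  rw [hpV]
  exact (((hg.fderiv_right (by norm_num)).comp hcurve).clm_apply contDiff_const).differentiable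
    one_ne_zero

end

/-- Under commutation (C₀) and the total-variation condition (B), one has
`d/dt(δ⁽ᶜ⁾g) = Σᵢ 𝒟ᵢg · δqᵢ`. -/
theorem total_variation_commutation_cetaev_deriv {n : ℕ}
    (g : (Fin n → ℝ) → (Fin n → ℝ) → ℝ → ℝ)
    (hg : ContDiff ℝ 2 (fun p : ((Fin n → ℝ) × (Fin n → ℝ)) × ℝ => g p.1.1 p.1.2 p.2))
    (q : ℝ → Fin n → ℝ) (hq : ContDiff ℝ 2 q)
    (δq δq' : ℝ → Fin n → ℝ)
    (hδq : ∀ i, ContDiff ℝ 1 fun s => δq s i)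
    -- commutation relations (C₀): δq̇ᵢ = d/dt(δqᵢ)
    (hcomm : ∀ s i, δq' s i = deriv (fun u => δq u i) s)
    -- total variation condition (B): δ⁽ᵛ⁾g = 0 identically in t
    (hB : ∀ s, (∑ i, pQ g i (q s) (vel q s) s * δq s i)
        + ∑ i, pV g i (q s) (vel q s) s * δq' s i = 0)
    (t : ℝ) :
    deriv (fun s => ∑ i, pV g i (q s) (vel q s) s * δq s i) t
      = ∑ i, (deriv (fun s => pV g i (q s) (vel q s) s) t - pQ g i (q t) (vel q t) t)
          * δq t i := by
  have hproduct : HasDerivAt (fun s => ∑ i, pV g i (q s) (vel q s) s * δq s i)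
      (∑ i, (deriv (fun s => pV g i (q s) (vel q s) s) t * δq t i
        + pV g i (q t) (vel q t) t * δq' t i)) t := by
    refine HasDerivAt.fun_sum fun i _ => ?_
    rw [hcomm]
    exact (differentiable_pV_along_curve hg hq i t).hasDerivAt.mul
      ((hδq i).differentiable one_ne_zero t).hasDerivAt
  rw [hproduct.deriv, Finset.sum_add_distrib]
  simp only [sub_mul, Finset.sum_sub_distrib]
  -- (B) trades the term `∑ pV · δq̇` of the product rule for `-∑ pQ · δq`.
  linarith [hB t]
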